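/- arXiv:1305.3337 — 4 statements merged into one kernel-verified Lean document; each statement's English description precedes it below -/
import Mathlib

section
/- Let f : ℝ → ℝ be C^3 with f(0) = f'(0) = 0 and f''(0) > 0, and let L(h) be the length of the sublevel interval {f < h} near 0. Then f''(0) = lim_{h→0+} 8h / L(h)^2. -/
/-!
If `m < f''(0) < M`, then near `0` the function `f` is squeezed between the parabolas
`m x² / 2` and `M x² / 2`, because `f - m x² / 2` and `M x² / 2 - f` are convex with a critical
point at `0`. For small `h` the sublevel set is then squeezed between the intervals of
half-lengths `√(2h/M)` and `√(2h/m)`, so `8h / L(h)² ∈ [m, M]`. A cruder parabola, valid on all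
of `(-δ, δ)`, keeps the sublevel set inside the small window where the sharp bounds hold.
-/

open MeasureTheory Filter Topology Set

lemma exists_pos_forall_Ioo_of_eventually_nhds_zero {p : ℝ → Prop} (h : ∀ᶠ x in 𝓝 0, p x) :
    ∃ r > 0, ∀ x ∈ Ioo (-r) r, p x := by
  obtain ⟨r, hr, hp⟩ := (nhds_basis_Ioo_pos (0 : ℝ)).eventually_iff.1 h
  exact ⟨r, hr, by simpa using hp⟩

lemma half_mul_sq_le_of_le_deriv2 {D : Set ℝ} (hD : Convex ℝ D) (h0D : 0 ∈ interior D)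
    {f f' f'' : ℝ → ℝ} {m : ℝ} (hf : ∀ x ∈ D, HasDerivAt f (f' x) x)
    (hf' : ∀ x ∈ D, HasDerivAt f' (f'' x) x) (h0 : f 0 = 0) (h1 : f' 0 = 0)
    (hm : ∀ x ∈ D, m ≤ f'' x) {x : ℝ} (hx : x ∈ D) : m / 2 * x ^ 2 ≤ f x := by
  have hg : ∀ y ∈ D, HasDerivAt (fun y => f y - m / 2 * y ^ 2) (f' y - m * y) y := fun y hy =>
    ((hf y hy).sub ((hasDerivAt_pow 2 y).const_mul (m / 2))).congr_deriv (by ring)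
  have hg' : ∀ y ∈ D, HasDerivAt (fun y => f' y - m * y) (f'' y - m) y := fun y hy =>
    ((hf' y hy).sub ((hasDerivAt_id y).const_mul m)).congr_deriv (by ring)
  have hconvex : ConvexOn ℝ D (fun y => f y - m / 2 * y ^ 2) :=
    convexOn_of_hasDerivWithinAt2_nonneg hD
      (fun y hy => (hg y hy).continuousAt.continuousWithinAt)
      (fun y hy => (hg y (interior_subset hy)).hasDerivWithinAt)
      (fun y hy => (hg' y (interior_subset hy)).hasDerivWithinAt)
      (fun y hy => sub_nonneg.2 (hm y (interior_subset hy)))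
  have hmin := hconvex.isMinOn_of_rightDeriv_eq_zero h0D <| by
    rw [(hg 0 (interior_subset h0D)).hasDerivWithinAt.derivWithin (uniqueDiffWithinAt_Ioi 0), h1]
    ring
  simpa [h0] using hmin hx

lemma le_half_mul_sq_of_deriv2_le {D : Set ℝ} (hD : Convex ℝ D) (h0D : 0 ∈ interior D)
    {f f' f'' : ℝ → ℝ} {M : ℝ} (hf : ∀ x ∈ D, HasDerivAt f (f' x) x)
    (hf' : ∀ x ∈ D, HasDerivAt f' (f'' x) x) (h0 : f 0 = 0) (h1 : f' 0 = 0)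
    (hM : ∀ x ∈ D, f'' x ≤ M) {x : ℝ} (hx : x ∈ D) : f x ≤ M / 2 * x ^ 2 := by
  have := half_mul_sq_le_of_le_deriv2 hD h0D (f := -f) (f' := -f') (f'' := -f'')
    (fun y hy => (hf y hy).neg) (fun y hy => (hf' y hy).neg) (by simp [h0]) (by simp [h1])
    (fun y hy => neg_le_neg (hM y hy)) hx
  simp only [Pi.neg_apply] at this
  linarith

lemma toReal_volume_mem_Icc_of_Ioo_subset_of_subset_Icc {S : Set ℝ} {a b : ℝ} (ha : 0 < a)
    (hIoo : Ioo (-a) a ⊆ S) (hIcc : S ⊆ Icc (-b) b) :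
    (volume S).toReal ∈ Icc (2 * a) (2 * b) := by
  have hb : -b ≤ b := by
    obtain ⟨h₁, h₂⟩ := hIcc (hIoo ⟨neg_neg_of_pos ha, ha⟩)
    linarith
  have hfin : volume S ≠ ⊤ := (measure_mono hIcc |>.trans_lt measure_Icc_lt_top).ne
  refine ⟨?_, ?_⟩
  · calc 2 * a = volume.real (Ioo (-a) a) := by rw [Real.volume_real_Ioo_of_le (by linarith)]; ring
      _ ≤ volume.real S := measureReal_mono hIoo hfin
  · calc volume.real S ≤ volume.real (Icc (-b) b) := measureReal_mono hIcc measure_Icc_lt_top.ne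
      _ = 2 * b := by rw [Real.volume_real_Icc_of_le (by linarith)]; ring

lemma eight_mul_div_sq_mem_Icc {h m M L : ℝ} (hh : 0 < h) (hm : 0 < m) (hM : 0 < M)
    (hL : L ∈ Icc (2 * √(2 * h / M)) (2 * √(2 * h / m))) : 8 * h / L ^ 2 ∈ Icc m M := by
  obtain ⟨hLlo, hLhi⟩ := hL
  have hsqrtM : 0 < √(2 * h / M) := Real.sqrt_pos.2 (by positivity)
  have hLsq_lo : 8 * h / M ≤ L ^ 2 := by
    calc 8 * h / M = (2 * √(2 * h / M)) ^ 2 := by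
          rw [mul_pow, Real.sq_sqrt (by positivity)]; ring
      _ ≤ L ^ 2 := pow_le_pow_left₀ (by positivity) hLlo 2
  have hLsq_hi : L ^ 2 ≤ 8 * h / m := by
    calc L ^ 2 ≤ (2 * √(2 * h / m)) ^ 2 := pow_le_pow_left₀ (by linarith) hLhi 2
      _ = 8 * h / m := by rw [mul_pow, Real.sq_sqrt (by positivity)]; ring
  have hLsq : 0 < L ^ 2 := pow_pos (by linarith) 2
  rw [le_div_iff₀ hm] at hLsq_hi
  rw [div_le_iff₀ hM] at hLsq_lo
  constructor
  · rw [le_div_iff₀ hLsq]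
    linarith
  · rw [div_le_iff₀ hLsq]
    linarith

lemma eventually_eight_mul_div_sq_volume_sublevel_mem_Icc {f : ℝ → ℝ} {ε r k m M : ℝ}
    (hr : 0 < r) (hrε : r ≤ ε) (hk : 0 < k) (hm : 0 < m) (hM : 0 < M)
    (hglobal : ∀ x ∈ Ioo (-ε) ε, k * x ^ 2 ≤ f x)
    (hlower : ∀ x ∈ Ioo (-r) r, m / 2 * x ^ 2 ≤ f x)
    (hupper : ∀ x ∈ Ioo (-r) r, f x ≤ M / 2 * x ^ 2) :
    ∀ᶠ h in 𝓝[>] 0, 8 * h / (volume (Ioo (-ε) ε ∩ {x | f x < h})).toReal ^ 2 ∈ Icc m M := by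
  have hbound : 0 < min (k * r ^ 2) (M / 2 * r ^ 2) := by positivity
  filter_upwards [Ioo_mem_nhdsGT hbound] with h ⟨hh, hhr⟩
  have hhk : h < k * r ^ 2 := hhr.trans_le (min_le_left _ _)
  have hhM : h < M / 2 * r ^ 2 := hhr.trans_le (min_le_right _ _)
  set a := √(2 * h / M)
  have ha : 0 < a := Real.sqrt_pos.2 (by positivity)
  have ha2 : a ^ 2 = 2 * h / M := Real.sq_sqrt (by positivity)
  have har : a < r := by
    rw [Real.sqrt_lt' hr, div_lt_iff₀ hM]
    linarith
  refine eight_mul_div_sq_mem_Icc hh hm hM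
    (toReal_volume_mem_Icc_of_Ioo_subset_of_subset_Icc ha ?_ ?_)
  · intro x hx
    have hxr : x ∈ Ioo (-r) r := ⟨by linarith [hx.1], by linarith [hx.2]⟩
    refine ⟨⟨by linarith [hxr.1], by linarith [hxr.2]⟩, ?_⟩
    calc f x ≤ M / 2 * x ^ 2 := hupper x hxr
      _ < M / 2 * a ^ 2 := mul_lt_mul_of_pos_left (sq_lt_sq' hx.1 hx.2) (by positivity)
      _ = h := by rw [ha2]; field_simp
  · rintro x ⟨hxε, hxh : f x < h⟩
    have hxr : x ∈ Ioo (-r) r := by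
      refine abs_lt.1 (abs_lt_of_sq_lt_sq ?_ hr.le)
      nlinarith [hglobal x hxε]
    have hx2 : x ^ 2 ≤ 2 * h / m := by
      rw [le_div_iff₀ hm]
      linarith [hlower x hxr]
    exact abs_le.1 (Real.abs_le_sqrt hx2)

lemma tendsto_nhds_of_forall_eventually_mem_Icc {α : Type*} {l : Filter α} {g : α → ℝ} {c : ℝ}
    (hc : 0 < c) (h : ∀ m M, 0 < m → m < c → c < M → ∀ᶠ x in l, g x ∈ Icc m M) :
    Tendsto g l (𝓝 c) := by
  refine tendsto_order.2 ⟨fun a ha => ?_, fun b hb => ?_⟩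
  · obtain ⟨m, ham, hmc⟩ := exists_between (max_lt ha hc)
    filter_upwards [h m (c + 1) ((le_max_right _ _).trans_lt ham) hmc (lt_add_one c)] with x hx
    exact ((le_max_left _ _).trans_lt ham).trans_le hx.1
  · obtain ⟨M, hcM, hMb⟩ := exists_between hb
    filter_upwards [h (c / 2) M (half_pos hc) (half_lt_self hc) hcM] with x hx
    exact hx.2.trans_lt hMb

theorem curvature_from_chord_length (f : ℝ → ℝ) (hf : ContDiff ℝ 3 f)
    (h0 : f 0 = 0) (h1 : deriv f 0 = 0) (h2 : 0 < iteratedDeriv 2 f 0) :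
    ∃ δ > 0, (∀ x ∈ Set.Ioo (-δ) δ, 0 < iteratedDeriv 2 f x) ∧
      ∀ ε : ℝ, 0 < ε → ε ≤ δ →
        Tendsto
          (fun h : ℝ =>
            8 * h / ((volume (Set.Ioo (-ε) ε ∩ {x : ℝ | f x < h})).toReal) ^ 2)
          (𝓝[>] 0)
          (𝓝 (iteratedDeriv 2 f 0)) := by
  set c := iteratedDeriv 2 f 0
  have hf' (x : ℝ) : HasDerivAt f (deriv f x) x := (hf.differentiable (by norm_num) x).hasDerivAt
  have hf'' (x : ℝ) : HasDerivAt (deriv f) (iteratedDeriv 2 f x) x := by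
    rw [iteratedDeriv_succ, ← iteratedDeriv_one]
    exact (hf.differentiable_iteratedDeriv 1 (by norm_num) x).hasDerivAt
  have hcont : ContinuousAt (iteratedDeriv 2 f) 0 :=
    (hf.continuous_iteratedDeriv 2 (by norm_num)).continuousAt
  obtain ⟨δ, hδ, hδc⟩ :=
    exists_pos_forall_Ioo_of_eventually_nhds_zero (hcont.eventually (lt_mem_nhds (half_lt_self h2)))
  refine ⟨δ, hδ, fun x hx => (half_pos h2).trans (hδc x hx), fun ε hε hεδ => ?_⟩
  have hglobal : ∀ x ∈ Ioo (-ε) ε, c / 2 / 2 * x ^ 2 ≤ f x := fun x hx =>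
    half_mul_sq_le_of_le_deriv2 (convex_Ioo _ _) (by simp [hδ]) (fun y _ => hf' y)
      (fun y _ => hf'' y) h0 h1 (fun y hy => (hδc y hy).le)
      ⟨by linarith [hx.1], by linarith [hx.2]⟩
  refine tendsto_nhds_of_forall_eventually_mem_Icc h2 fun m M hm hmc hcM => ?_
  obtain ⟨r, hr, hrc⟩ :=
    exists_pos_forall_Ioo_of_eventually_nhds_zero (hcont.eventually (Ioo_mem_nhds hmc hcM))
  have hr' : 0 < min r ε := lt_min hr hε
  have h0r : (0 : ℝ) ∈ interior (Ioo (-min r ε) (min r ε)) := by simp [hr']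
  have hrc' : ∀ x ∈ Ioo (-min r ε) (min r ε), iteratedDeriv 2 f x ∈ Ioo m M := fun x hx =>
    hrc x ⟨by linarith [hx.1, min_le_left r ε], by linarith [hx.2, min_le_left r ε]⟩
  exact eventually_eight_mul_div_sq_volume_sublevel_mem_Icc hr' (min_le_right _ _)
    (by positivity) hm (hm.trans (hmc.trans hcM)) hglobal
    (fun x => half_mul_sq_le_of_le_deriv2 (convex_Ioo _ _) h0r (fun y _ => hf' y)
      (fun y _ => hf'' y) h0 h1 (fun y hy => (hrc' y hy).1.le))
    (fun x => le_half_mul_sq_of_deriv2_le (convex_Ioo _ _) h0r (fun y _ => hf' y)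
      (fun y _ => hf'' y) h0 h1 (fun y hy => (hrc' y hy).2.le))
end

section
/- Let f : I → ℝ be a C^3 strictly convex function (f'' > 0) whose graph satisfies: for every point P = (x, f(x)) and every sufficiently small h > 0, the area S_P(h) cut off by the chord at normal distance h from P equals a·(h·√(1+f'(x)^2))^{3/2} for a fixed constant a > 0 independent of P. Then f'' is constant on I, i.e. f is a quadratic polynomial. -/
open MeasureTheory

/-- The line parallel to the tangent of the graph of `f` at `(x₀, f x₀)`,
at normal distance `h` on the convex (upper) side, as a function of `x`. -/
noncomputable def chordLine (f : ℝ → ℝ) (x₀ h x : ℝ) : ℝ :=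
  f x₀ + deriv f x₀ * (x - x₀) + h * Real.sqrt (1 + (deriv f x₀) ^ 2)

/-- The area of the region bounded by the graph of `f` (restricted to `I`)
and the chord parallel to the tangent at `(x₀, f x₀)` at normal distance `h`. -/
noncomputable def SP (f : ℝ → ℝ) (I : Set ℝ) (x₀ h : ℝ) : ℝ :=
  ∫ x in {x ∈ I | f x < chordLine f x₀ h x}, (chordLine f x₀ h x - f x)

/-!
Fix `x₀` with `c = f''(x₀)` and `k < c < K`. On a small window around `x₀` Taylor's theorem puts
the gap between the graph and its tangent between `k/2 (x - x₀)²` and `K/2 (x - x₀)²`. By convexity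
the region cut off by the chord at vertical height `d` is an interval, so it is squeezed between
two parabolic segments; Archimedes' quadrature gives the area `4/3 · d · √(2d/k)` of such a segment.
Hence `4/3 · √(2/K) ≤ a ≤ 4/3 · √(2/k)`, and letting `k, K → c` yields `f'' ≡ 32 / (9a²)`.
-/

open Set

theorem Set.OrdConnected.subset_Ioo {α : Type*} [LinearOrder α] {s : Set α}
    (hs : s.OrdConnected) {a b x₀ : α} (hx₀ : x₀ ∈ s) (ha : a ∉ s) (hb : b ∉ s)
    (hax₀ : a ≤ x₀) (hx₀b : x₀ ≤ b) :
    s ⊆ Ioo a b := by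
  intro x hx
  constructor
  · by_contra! hxa
    exact ha (hs.out hx hx₀ ⟨hxa, hax₀⟩)
  · by_contra! hbx
    exact hb (hs.out hx₀ hx ⟨hx₀b, hbx⟩)

theorem ConvexOn.add_mul_sub_le_of_hasDerivAt {S : Set ℝ} {g : ℝ → ℝ} {g' x₀ x : ℝ}
    (hg : ConvexOn ℝ S g) (hx₀ : x₀ ∈ S) (hx : x ∈ S) (hd : HasDerivAt g g' x₀) :
    g x₀ + g' * (x - x₀) ≤ g x := by
  rcases lt_trichotomy x₀ x with h | rfl | h
  · have := hg.le_slope_of_hasDerivAt hx₀ hx h hd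
    rw [slope_def_field, le_div_iff₀ (sub_pos.2 h)] at this
    linarith
  · simp
  · have := hg.slope_le_of_hasDerivAt hx hx₀ h hd
    rw [slope_def_field, div_le_iff₀ (sub_pos.2 h)] at this
    linarith

section Taylor

variable {S : Set ℝ} {f f' f'' : ℝ → ℝ} {x₀ x : ℝ}

theorem half_mul_sq_le_sub_tangent (hS : Convex ℝ S) (hf : ∀ y ∈ S, HasDerivAt f (f' y) y)
    (hf' : ∀ y ∈ S, HasDerivAt f' (f'' y) y) {m : ℝ} (hm : ∀ y ∈ S, m ≤ f'' y)
    (hx₀ : x₀ ∈ S) (hx : x ∈ S) :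
    m / 2 * (x - x₀) ^ 2 ≤ f x - (f x₀ + f' x₀ * (x - x₀)) := by
  have hg : ∀ y ∈ S, HasDerivAt (fun z => f z - m / 2 * (z - x₀) ^ 2) (f' y - m * (y - x₀)) y :=
    fun y hy => ((hf y hy).sub ((((hasDerivAt_id y).sub_const x₀).pow 2).const_mul
      (m / 2))).congr_deriv (by simp only [id, Nat.cast_ofNat, mul_one]; ring)
  have hg' : ∀ y ∈ S, HasDerivAt (fun z => f' z - m * (z - x₀)) (f'' y - m) y :=
    fun y hy => ((hf' y hy).sub (((hasDerivAt_id y).sub_const x₀).const_mul m)).congr_deriv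
      (by simp)
  have hconv : ConvexOn ℝ S (fun z => f z - m / 2 * (z - x₀) ^ 2) :=
    convexOn_of_hasDerivWithinAt2_nonneg hS
      (fun y hy => (hg y hy).continuousAt.continuousWithinAt)
      (fun y hy => (hg y (interior_subset hy)).hasDerivWithinAt)
      (fun y hy => (hg' y (interior_subset hy)).hasDerivWithinAt)
      (fun y hy => sub_nonneg.2 (hm y (interior_subset hy)))
  have := hconv.add_mul_sub_le_of_hasDerivAt hx₀ hx (hg x₀ hx₀)
  linarith

theorem sub_tangent_le_half_mul_sq (hS : Convex ℝ S) (hf : ∀ y ∈ S, HasDerivAt f (f' y) y)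
    (hf' : ∀ y ∈ S, HasDerivAt f' (f'' y) y) {M : ℝ} (hM : ∀ y ∈ S, f'' y ≤ M)
    (hx₀ : x₀ ∈ S) (hx : x ∈ S) :
    f x - (f x₀ + f' x₀ * (x - x₀)) ≤ M / 2 * (x - x₀) ^ 2 := by
  have := half_mul_sq_le_sub_tangent (f := -f) (f' := -f') (f'' := -f'') hS
    (fun y hy => (hf y hy).neg) (fun y hy => (hf' y hy).neg) (m := -M)
    (fun y hy => neg_le_neg (hM y hy)) hx₀ hx
  simp only [Pi.neg_apply] at this
  linarith

end Taylor

theorem integral_parabolic_segment (x₀ d k r : ℝ) (hr : 0 ≤ r) (hkr : k * r ^ 2 = 2 * d) :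
    ∫ x in Ioo (x₀ - r) (x₀ + r), (d - k / 2 * (x - x₀) ^ 2) = 4 / 3 * d * r := by
  rw [← integral_Ioc_eq_integral_Ioo, ← intervalIntegral.integral_of_le (by linarith),
    intervalIntegral.integral_comp_sub_right (fun y => d - k / 2 * y ^ 2) x₀,
    intervalIntegral.integral_sub intervalIntegrable_const
      ((intervalIntegral.intervalIntegrable_pow 2).const_mul _),
    intervalIntegral.integral_const, intervalIntegral.integral_const_mul, integral_pow]
  simp only [smul_eq_mul]
  linear_combination (-r / 3) * hkr

section ParabolicComparison

variable {g : ℝ → ℝ} {E : Set ℝ} {x₀ d r : ℝ}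

theorem four_thirds_mul_le_setIntegral {K : ℝ} (hr : 0 ≤ r) (hKr : K * r ^ 2 = 2 * d)
    (hE : MeasurableSet E) (hsub : Ioo (x₀ - r) (x₀ + r) ⊆ E)
    (hint : IntegrableOn (fun x => d - g x) E) (hgE : ∀ x ∈ E, g x ≤ d)
    (hgK : ∀ x ∈ Ioo (x₀ - r) (x₀ + r), g x ≤ K / 2 * (x - x₀) ^ 2) :
    4 / 3 * d * r ≤ ∫ x in E, (d - g x) :=
  calc 4 / 3 * d * r = ∫ x in Ioo (x₀ - r) (x₀ + r), (d - K / 2 * (x - x₀) ^ 2) :=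
        (integral_parabolic_segment x₀ d K r hr hKr).symm
    _ ≤ ∫ x in Ioo (x₀ - r) (x₀ + r), (d - g x) :=
        setIntegral_mono_on
          ((Continuous.integrableOn_Icc (by fun_prop)).mono_set Ioo_subset_Icc_self)
          (hint.mono_set hsub) measurableSet_Ioo fun x hx => by linarith [hgK x hx]
    _ ≤ ∫ x in E, (d - g x) :=
        setIntegral_mono_set hint ((ae_restrict_mem hE).mono fun x hx => sub_nonneg.2 (hgE x hx))
          hsub.eventuallyLE

theorem setIntegral_le_four_thirds_mul {k : ℝ} (hk : 0 ≤ k) (hr : 0 ≤ r)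
    (hkr : k * r ^ 2 = 2 * d) (hE : MeasurableSet E) (hsub : E ⊆ Ioo (x₀ - r) (x₀ + r))
    (hint : IntegrableOn (fun x => d - g x) E)
    (hgk : ∀ x ∈ E, k / 2 * (x - x₀) ^ 2 ≤ g x) :
    ∫ x in E, (d - g x) ≤ 4 / 3 * d * r := by
  have hpar : IntegrableOn (fun x => d - k / 2 * (x - x₀) ^ 2) (Ioo (x₀ - r) (x₀ + r)) :=
    (Continuous.integrableOn_Icc (by fun_prop)).mono_set Ioo_subset_Icc_self
  have hpos : ∀ x ∈ Ioo (x₀ - r) (x₀ + r), 0 ≤ d - k / 2 * (x - x₀) ^ 2 := by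
    intro x hx
    have : (x - x₀) ^ 2 ≤ r ^ 2 := sq_le_sq' (by linarith [hx.1]) (by linarith [hx.2])
    linarith [mul_le_mul_of_nonneg_left this (by positivity : 0 ≤ k / 2)]
  calc ∫ x in E, (d - g x) ≤ ∫ x in E, (d - k / 2 * (x - x₀) ^ 2) :=
        setIntegral_mono_on hint (hpar.mono_set hsub) hE fun x hx => by linarith [hgk x hx]
    _ ≤ ∫ x in Ioo (x₀ - r) (x₀ + r), (d - k / 2 * (x - x₀) ^ 2) :=
        setIntegral_mono_set hpar ((ae_restrict_mem measurableSet_Ioo).mono hpos)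
          hsub.eventuallyLE
    _ = 4 / 3 * d * r := integral_parabolic_segment x₀ d k r hr hkr

end ParabolicComparison

theorem four_thirds_bounds_setIntegral_sublevel {g : ℝ → ℝ} {I : Set ℝ} {x₀ η k K d r R : ℝ}
    (hg : ConvexOn ℝ I g) (hW : Ioo (x₀ - η) (x₀ + η) ⊆ I)
    (hlow : ∀ y ∈ Ioo (x₀ - η) (x₀ + η), k / 2 * (y - x₀) ^ 2 ≤ g y)
    (hup : ∀ y ∈ Ioo (x₀ - η) (x₀ + η), g y ≤ K / 2 * (y - x₀) ^ 2) (hd : 0 < d)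
    (hr : 0 ≤ r) (hKr : K * r ^ 2 = 2 * d) (hkR : k * R ^ 2 = 2 * d) (hrR : r ≤ R)
    (hRη : R < η) :
    4 / 3 * d * r ≤ ∫ x in {x ∈ I | g x < d}, (d - g x) ∧
      ∫ x in {x ∈ I | g x < d}, (d - g x) ≤ 4 / 3 * d * R := by
  set E := {x ∈ I | g x < d}
  have h2d : (0 : ℝ) < 2 * d := by positivity
  have hK : 0 < K := pos_of_mul_pos_left (hKr ▸ h2d) (sq_nonneg r)
  have hk : 0 < k := pos_of_mul_pos_left (hkR ▸ h2d) (sq_nonneg R)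
  have hx₀ : x₀ ∈ Ioo (x₀ - η) (x₀ + η) := ⟨by linarith, by linarith⟩
  have hgx₀ : g x₀ = 0 := le_antisymm (by simpa using hup x₀ hx₀) (by simpa using hlow x₀ hx₀)
  have hE : Convex ℝ E := hg.convex_lt d
  have hRE : ∀ y ∈ Ioo (x₀ - η) (x₀ + η), (y - x₀) ^ 2 = R ^ 2 → y ∉ E :=
    fun y hy hyR hyE => by linarith [hyR ▸ hlow y hy, hyE.2]
  have hEsub : E ⊆ Ioo (x₀ - R) (x₀ + R) :=
    hE.ordConnected.subset_Ioo ⟨hW hx₀, hgx₀ ▸ hd⟩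
      (hRE _ ⟨by linarith, by linarith⟩ (by ring)) (hRE _ ⟨by linarith, by linarith⟩ (by ring))
      (by linarith) (by linarith)
  have hgc : ContinuousOn g (Ioo (x₀ - η) (x₀ + η)) :=
    (hg.subset hW (convex_Ioo _ _)).continuousOn isOpen_Ioo
  have hIcc : Icc (x₀ - R) (x₀ + R) ⊆ Ioo (x₀ - η) (x₀ + η) :=
    Icc_subset_Ioo (by linarith) (by linarith)
  have hint : IntegrableOn (fun x => d - g x) E :=
    ((continuousOn_const.sub (hgc.mono hIcc)).integrableOn_Icc).mono_set
      (hEsub.trans Ioo_subset_Icc_self)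
  have hrW : Ioo (x₀ - r) (x₀ + r) ⊆ Ioo (x₀ - η) (x₀ + η) :=
    Ioo_subset_Ioo (by linarith) (by linarith)
  have hrE : Ioo (x₀ - r) (x₀ + r) ⊆ E := fun y hy => by
    refine ⟨hW (hrW hy), (hup y (hrW hy)).trans_lt ?_⟩
    have : (y - x₀) ^ 2 < r ^ 2 := sq_lt_sq' (by linarith [hy.1]) (by linarith [hy.2])
    linarith [mul_lt_mul_of_pos_left this (half_pos hK)]
  exact ⟨four_thirds_mul_le_setIntegral hr hKr hE.ordConnected.measurableSet hrE hint
      (fun x hx => hx.2.le) (fun y hy => hup y (hrW hy)),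
    setIntegral_le_four_thirds_mul hk.le (hr.trans hrR) hkR hE.ordConnected.measurableSet hEsub
      hint (fun y hy => hlow y (hIcc (Ioo_subset_Icc_self (hEsub hy))))⟩

section Algebra

variable {a d r : ℝ}

theorem sq_rpow_three_halves (hd : 0 ≤ d) : (d ^ ((3 : ℝ) / 2)) ^ 2 = d ^ 3 := by
  rw [← Real.rpow_natCast, ← Real.rpow_mul hd]
  norm_num

theorem le_sq_mul_of_four_thirds_mul_le {K : ℝ} (hd : 0 < d) (hK : 0 ≤ K) (hr : 0 ≤ r)
    (hKr : K * r ^ 2 = 2 * d) (h : 4 / 3 * d * r ≤ a * d ^ ((3 : ℝ) / 2)) :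
    32 / 9 ≤ a ^ 2 * K := by
  have hsq := pow_le_pow_left₀ (by positivity) h 2
  refine le_of_mul_le_mul_right ?_ (pow_pos hd 3)
  calc 32 / 9 * d ^ 3 = K * (4 / 3 * d * r) ^ 2 := by
        linear_combination (-16 / 9 * d ^ 2) * hKr
    _ ≤ K * (a * d ^ ((3 : ℝ) / 2)) ^ 2 := mul_le_mul_of_nonneg_left hsq hK
    _ = a ^ 2 * K * d ^ 3 := by rw [mul_pow, sq_rpow_three_halves hd.le]; ring

theorem sq_mul_le_of_le_four_thirds_mul {k : ℝ} (ha : 0 ≤ a) (hd : 0 < d) (hk : 0 ≤ k)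
    (hkr : k * r ^ 2 = 2 * d) (h : a * d ^ ((3 : ℝ) / 2) ≤ 4 / 3 * d * r) :
    a ^ 2 * k ≤ 32 / 9 := by
  have hsq := pow_le_pow_left₀ (by positivity) h 2
  refine le_of_mul_le_mul_right ?_ (pow_pos hd 3)
  calc a ^ 2 * k * d ^ 3 = k * (a * d ^ ((3 : ℝ) / 2)) ^ 2 := by
        rw [mul_pow, sq_rpow_three_halves hd.le]; ring
    _ ≤ k * (4 / 3 * d * r) ^ 2 := mul_le_mul_of_nonneg_left hsq hk
    _ = 32 / 9 * d ^ 3 := by linear_combination (16 / 9 * d ^ 2) * hkr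

end Algebra

noncomputable def tangentGap (f : ℝ → ℝ) (x₀ x : ℝ) : ℝ :=
  f x - (f x₀ + deriv f x₀ * (x - x₀))

theorem SP_eq_setIntegral_tangentGap (f : ℝ → ℝ) (I : Set ℝ) (x₀ h : ℝ) :
    SP f I x₀ h = ∫ x in {x ∈ I | tangentGap f x₀ x < h * √(1 + deriv f x₀ ^ 2)},
      (h * √(1 + deriv f x₀ ^ 2) - tangentGap f x₀ x) := by
  have hchord : ∀ x,
      chordLine f x₀ h x - f x = h * √(1 + deriv f x₀ ^ 2) - tangentGap f x₀ x := fun x => by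
    simp only [chordLine, tangentGap]
    ring
  simp only [SP, hchord, ← sub_pos (a := chordLine f x₀ h _), sub_pos]

section CurvatureFromArea

variable {f : ℝ → ℝ} {I : Set ℝ} {x₀ x : ℝ}

theorem ContDiffOn.hasDerivAt_deriv (hf : ContDiffOn ℝ 1 f I) (hI : IsOpen I) (hx : x ∈ I) :
    HasDerivAt f (deriv f x) x :=
  ((hf.differentiableOn one_ne_zero).differentiableAt (hI.mem_nhds hx)).hasDerivAt

theorem ContDiffOn.hasDerivAt_iteratedDeriv_two (hf : ContDiffOn ℝ 2 f I) (hI : IsOpen I)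
    (hx : x ∈ I) : HasDerivAt (deriv f) (iteratedDeriv 2 f x) x := by
  rw [iteratedDeriv_succ, iteratedDeriv_one]
  exact (hf.deriv_of_isOpen hI (m := 1) (by norm_num)).hasDerivAt_deriv hI hx

theorem ContDiffOn.continuousOn_iteratedDeriv_two (hf : ContDiffOn ℝ 2 f I) (hI : IsOpen I) :
    ContinuousOn (iteratedDeriv 2 f) I := by
  rw [iteratedDeriv_succ, iteratedDeriv_one]
  exact (hf.deriv_of_isOpen hI (m := 1) (by norm_num)).continuousOn_deriv_of_isOpen hI le_rfl

theorem hasDerivAt_tangentGap (hf : HasDerivAt f (deriv f x) x) :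
    HasDerivAt (tangentGap f x₀) (deriv f x - deriv f x₀) x :=
  (hf.sub ((((hasDerivAt_id x).sub_const x₀).const_mul (deriv f x₀)).const_add
    (f x₀))).congr_deriv (by simp)

theorem convexOn_tangentGap (hI : Convex ℝ I) (hIo : IsOpen I) (hf : ContDiffOn ℝ 2 f I)
    (hconv : ∀ x ∈ I, 0 ≤ iteratedDeriv 2 f x) : ConvexOn ℝ I (tangentGap f x₀) := by
  have hd : ∀ y ∈ I, HasDerivAt (tangentGap f x₀) (deriv f y - deriv f x₀) y := fun y hy =>
    hasDerivAt_tangentGap ((hf.of_le one_le_two).hasDerivAt_deriv hIo hy)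
  refine convexOn_of_hasDerivWithinAt2_nonneg hI
    (fun y hy => (hd y hy).continuousAt.continuousWithinAt)
    (fun y hy => (hd y (interior_subset hy)).hasDerivWithinAt)
    (fun y hy => ((hf.hasDerivAt_iteratedDeriv_two hIo (interior_subset hy)).sub_const
      (deriv f x₀)).hasDerivWithinAt)
    (fun y hy => hconv y (interior_subset hy))

theorem exists_Ioo_tangentGap_bounds (hIo : IsOpen I) (hf : ContDiffOn ℝ 2 f I) (hx₀ : x₀ ∈ I)
    {k K : ℝ} (hkx₀ : k < iteratedDeriv 2 f x₀) (hKx₀ : iteratedDeriv 2 f x₀ < K) :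
    ∃ η > 0, Ioo (x₀ - η) (x₀ + η) ⊆ I ∧ ∀ y ∈ Ioo (x₀ - η) (x₀ + η),
      k / 2 * (y - x₀) ^ 2 ≤ tangentGap f x₀ y ∧ tangentGap f x₀ y ≤ K / 2 * (y - x₀) ^ 2 := by
  obtain ⟨η, hη, hW⟩ : ∃ η > 0, ∀ y ∈ Ioo (x₀ - η) (x₀ + η),
      y ∈ I ∧ iteratedDeriv 2 f y ∈ Ioo k K := by
    have hev : ∀ᶠ y in nhds x₀, y ∈ I ∧ iteratedDeriv 2 f y ∈ Ioo k K :=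
      (hIo.eventually_mem hx₀).and (((hf.continuousOn_iteratedDeriv_two hIo).continuousAt
        (hIo.mem_nhds hx₀)).eventually_mem (Ioo_mem_nhds hkx₀ hKx₀))
    simpa only [Real.ball_eq_Ioo] using Metric.eventually_nhds_iff_ball.1 hev
  have hx₀W : x₀ ∈ Ioo (x₀ - η) (x₀ + η) := ⟨by linarith, by linarith⟩
  have hfW : ∀ y ∈ Ioo (x₀ - η) (x₀ + η), HasDerivAt f (deriv f y) y := fun y hy =>
    (hf.of_le one_le_two).hasDerivAt_deriv hIo (hW y hy).1
  have hf'W : ∀ y ∈ Ioo (x₀ - η) (x₀ + η), HasDerivAt (deriv f) (iteratedDeriv 2 f y) y :=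
    fun y hy => hf.hasDerivAt_iteratedDeriv_two hIo (hW y hy).1
  exact ⟨η, hη, fun y hy => (hW y hy).1, fun y hy =>
    ⟨half_mul_sq_le_sub_tangent (convex_Ioo _ _) hfW hf'W (fun z hz => (hW z hz).2.1.le) hx₀W hy,
      sub_tangent_le_half_mul_sq (convex_Ioo _ _) hfW hf'W (fun z hz => (hW z hz).2.2.le) hx₀W
        hy⟩⟩

theorem curvature_bounds_of_area (hI : Convex ℝ I) (hIo : IsOpen I) (hf : ContDiffOn ℝ 2 f I)
    (hconv : ∀ x ∈ I, 0 ≤ iteratedDeriv 2 f x) {a : ℝ} (ha : 0 ≤ a) (hx₀ : x₀ ∈ I)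
    (harea : ∃ ε > 0, ∀ h : ℝ, 0 < h → h < ε →
      SP f I x₀ h = a * (h * √(1 + deriv f x₀ ^ 2)) ^ ((3 : ℝ) / 2))
    {k K : ℝ} (hk : 0 < k) (hkx₀ : k < iteratedDeriv 2 f x₀) (hKx₀ : iteratedDeriv 2 f x₀ < K) :
    a ^ 2 * k ≤ 32 / 9 ∧ 32 / 9 ≤ a ^ 2 * K := by
  obtain ⟨η, hη, hW, hgap⟩ := exists_Ioo_tangentGap_bounds hIo hf hx₀ hkx₀ hKx₀
  obtain ⟨ε, hε, hSP⟩ := harea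
  set s := √(1 + deriv f x₀ ^ 2)
  have hs : 0 < s := Real.sqrt_pos.2 (by positivity)
  obtain ⟨d, hd, hdε, hdη⟩ : ∃ d, 0 < d ∧ d < ε * s ∧ 2 * d < k * η ^ 2 :=
    ⟨min (ε * s) (k * η ^ 2 / 2) / 2, by positivity,
      by linarith [min_le_left (ε * s) (k * η ^ 2 / 2), mul_pos hε hs],
      by linarith [min_le_right (ε * s) (k * η ^ 2 / 2), mul_pos hk (pow_pos hη 2)]⟩
  have hK : 0 < K := hk.trans (hkx₀.trans hKx₀)
  -- `d = h · s` is the vertical distance `|PV|`; `r ≤ R` are the half-widths of the parabolic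
  -- segments of height `d` and curvatures `K`, `k`.
  set r := √(2 * d / K)
  set R := √(2 * d / k)
  have hKr : K * r ^ 2 = 2 * d := by rw [Real.sq_sqrt (by positivity)]; field_simp
  have hkR : k * R ^ 2 = 2 * d := by rw [Real.sq_sqrt (by positivity)]; field_simp
  have hrR : r ≤ R :=
    Real.sqrt_le_sqrt (div_le_div_of_nonneg_left (by positivity) hk (hkx₀.trans hKx₀).le)
  have hRη : R < η := by
    rw [Real.sqrt_lt' hη, div_lt_iff₀ hk]
    linarith
  have harea_d : ∫ x in {x ∈ I | tangentGap f x₀ x < d}, (d - tangentGap f x₀ x)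
      = a * d ^ ((3 : ℝ) / 2) := by
    have := hSP (d / s) (by positivity) (by rw [div_lt_iff₀ hs]; linarith)
    rwa [SP_eq_setIntegral_tangentGap, div_mul_cancel₀ _ hs.ne'] at this
  obtain ⟨hlo, hhi⟩ := four_thirds_bounds_setIntegral_sublevel (convexOn_tangentGap hI hIo hf hconv)
    hW (fun y hy => (hgap y hy).1) (fun y hy => (hgap y hy).2) hd (Real.sqrt_nonneg _) hKr hkR
    hrR hRη
  rw [harea_d] at hlo hhi
  exact ⟨sq_mul_le_of_le_four_thirds_mul ha hd hk.le hkR hhi,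
    le_sq_mul_of_four_thirds_mul_le hd hK.le (Real.sqrt_nonneg _) hKr hlo⟩

theorem iteratedDeriv_two_eq_of_area (hI : Convex ℝ I) (hIo : IsOpen I) (hf : ContDiffOn ℝ 2 f I)
    (hconv : ∀ x ∈ I, 0 ≤ iteratedDeriv 2 f x) {a : ℝ} (ha : 0 < a) (hx₀ : x₀ ∈ I)
    (hx₀pos : 0 < iteratedDeriv 2 f x₀)
    (harea : ∃ ε > 0, ∀ h : ℝ, 0 < h → h < ε →
      SP f I x₀ h = a * (h * √(1 + deriv f x₀ ^ 2)) ^ ((3 : ℝ) / 2)) :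
    iteratedDeriv 2 f x₀ = 32 / (9 * a ^ 2) := by
  have ha2 : 0 < 9 * a ^ 2 := by positivity
  apply le_antisymm
  · refine le_of_forall_lt_imp_le_of_dense fun k hk => ?_
    rcases le_or_gt k 0 with hk0 | hk0
    · exact hk0.trans (by positivity)
    · rw [le_div_iff₀ ha2]
      linarith [(curvature_bounds_of_area hI hIo hf hconv ha.le hx₀ harea hk0 hk
        (lt_add_one _)).1]
  · refine le_of_forall_gt_imp_ge_of_dense fun K hK => ?_
    rw [div_le_iff₀ ha2]
    linarith [(curvature_bounds_of_area hI hIo hf hconv ha.le hx₀ harea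
      (half_pos hx₀pos) (half_lt_self hx₀pos) hK).2]

end CurvatureFromArea

theorem exists_quadratic_of_iteratedDeriv_two_eq {f : ℝ → ℝ} {I : Set ℝ} (hIo : IsOpen I)
    (hIc : IsPreconnected I) (hf : ContDiffOn ℝ 2 f I) {c : ℝ}
    (hc : ∀ x ∈ I, iteratedDeriv 2 f x = c) :
    ∃ B C : ℝ, ∀ x ∈ I, f x = c / 2 * x ^ 2 + B * x + C := by
  obtain ⟨B, hB⟩ := hIo.exists_eq_add_of_deriv_eq hIc (g := fun x => c * x)
    (fun x hx => (hf.hasDerivAt_iteratedDeriv_two hIo hx).differentiableAt.differentiableWithinAt)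
    (by fun_prop) fun x hx => by simp [(hf.hasDerivAt_iteratedDeriv_two hIo hx).deriv, hc x hx]
  obtain ⟨C, hC⟩ := hIo.exists_eq_add_of_deriv_eq hIc (g := fun x => c / 2 * x ^ 2 + B * x)
    (fun x hx =>
      ((hf.of_le one_le_two).hasDerivAt_deriv hIo hx).differentiableAt.differentiableWithinAt)
    (by fun_prop) fun x hx => by
      have hd : HasDerivAt (fun y => c / 2 * y ^ 2 + B * y) (c * x + B) x :=
        (((hasDerivAt_pow 2 x).const_mul (c / 2)).add
          ((hasDerivAt_id' x).const_mul B)).congr_deriv (by push_cast; ring)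
      rw [hB hx, hd.deriv]
  exact ⟨B, C, hC⟩

theorem quadratic_of_archimedean_area_general (p q : ℝ) (f : ℝ → ℝ)
    (hf : ContDiffOn ℝ 3 f (Set.Ioo p q))
    (hconv : ∀ x ∈ Set.Ioo p q, 0 < iteratedDeriv 2 f x)
    (a : ℝ) (ha : 0 < a)
    (harea : ∀ x₀ ∈ Set.Ioo p q, ∃ ε > 0, ∀ h : ℝ, 0 < h → h < ε →
      SP f (Set.Ioo p q) x₀ h
        = a * (h * Real.sqrt (1 + (deriv f x₀) ^ 2)) ^ ((3 : ℝ) / 2)) :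
    (∃ c : ℝ, ∀ x ∈ Set.Ioo p q, iteratedDeriv 2 f x = c) ∧
    ∃ A B C : ℝ, ∀ x ∈ Set.Ioo p q, f x = A * x ^ 2 + B * x + C := by
  have hf2 : ContDiffOn ℝ 2 f (Ioo p q) := hf.of_le (by norm_num)
  have hc : ∀ x ∈ Ioo p q, iteratedDeriv 2 f x = 32 / (9 * a ^ 2) := fun x hx =>
    iteratedDeriv_two_eq_of_area (convex_Ioo p q) isOpen_Ioo hf2 (fun y hy => (hconv y hy).le) ha
      hx (hconv x hx) (harea x hx)
  obtain ⟨B, C, hBC⟩ :=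
    exists_quadratic_of_iteratedDeriv_two_eq isOpen_Ioo isPreconnected_Ioo hf2 hc
  exact ⟨⟨_, hc⟩, _, B, C, hBC⟩

theorem quadratic_of_archimedean_area (p q : ℝ) (hpq : p < q) (f : ℝ → ℝ)
    (hf : ContDiffOn ℝ 3 f (Set.Ioo p q))
    (hconv : ∀ x ∈ Set.Ioo p q, 0 < iteratedDeriv 2 f x)
    (a : ℝ) (ha : 0 < a)
    (harea : ∀ x₀ ∈ Set.Ioo p q, ∃ ε > 0, ∀ h : ℝ, 0 < h → h < ε →
      SP f (Set.Ioo p q) x₀ h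
        = a * (h * Real.sqrt (1 + (deriv f x₀) ^ 2)) ^ ((3 : ℝ) / 2)) :
    (∃ c : ℝ, ∀ x ∈ Set.Ioo p q, iteratedDeriv 2 f x = c) ∧
    ∃ A B C : ℝ, ∀ x ∈ Set.Ioo p q, f x = A * x ^ 2 + B * x + C :=
  quadratic_of_archimedean_area_general p q f hf hconv a ha harea
end

section
/- If S : (0, ε) → ℝ is differentiable with S'(h) = L(h), L is continuous and positive, S(h) = (2/3) h L(h) for all h in (0, ε), and lim_{h→0+} L(h)/√h exists and equals c > 0, then L(h) = c √h for all h in (0, ε). -/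
/-!
Since `S' = L`, the relation `S = (2/3) h L` is the Euler equation `h S' = (3/2) S`, so
`S h · h^(-3/2)` has zero derivative and is constant on `(0, ε)`. That quantity equals
`(2/3) L h / √h`, whose limit at `0⁺` is `(2/3) c`; hence `L h = c √h`.
-/

open Filter Topology

theorem hasDerivAt_mul_rpow_neg_of_mul_deriv_eq {f : ℝ → ℝ} {f' x p : ℝ} (hf : HasDerivAt f f' x)
    (hx : 0 < x) (hode : x * f' = p * f x) : HasDerivAt (fun y => f y * y ^ (-p)) 0 x := by
  refine (hf.mul (Real.hasDerivAt_rpow_const (p := -p) (Or.inl hx.ne'))).congr_deriv ?_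
  rw [Real.rpow_sub hx, Real.rpow_one]
  field_simp
  linear_combination x ^ (-p) * hode

theorem eqOn_Ioo_of_hasDerivAt_zero_of_tendsto {G : Type*} [NormedAddCommGroup G]
    [NormedSpace ℝ G] {f : ℝ → G} {a b : ℝ} {c : G}
    (hf : ∀ x ∈ Set.Ioo a b, HasDerivAt f 0 x) (hlim : Tendsto f (𝓝[>] a) (𝓝 c)) :
    ∀ x ∈ Set.Ioo a b, f x = c := by
  intro x hx
  have hconst : ∀ y ∈ Set.Ioo a b, f y = f x := fun y hy =>
    isOpen_Ioo.is_const_of_deriv_eq_zero isPreconnected_Ioo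
      (fun z hz => (hf z hz).differentiableAt.differentiableWithinAt)
      (fun z hz => (hf z hz).deriv) hy hx
  have hev : (fun _ => f x) =ᶠ[𝓝[>] a] f :=
    eventually_of_mem (Ioo_mem_nhdsGT (hx.1.trans hx.2)) fun y hy => (hconst y hy).symm
  exact tendsto_nhds_unique (tendsto_const_nhds.congr' hev) hlim

theorem rpow_neg_three_halves_mul {x : ℝ} (hx : 0 < x) : x ^ (-(3 / 2 : ℝ)) * x = (√x)⁻¹ := by
  rw [Real.sqrt_eq_rpow, ← Real.rpow_neg hx.le, ← Real.rpow_add_one hx.ne']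
  norm_num

theorem chord_length_sqrt_of_two_thirds_general (ε c : ℝ)
    (S L : ℝ → ℝ)
    (hS : ∀ h ∈ Set.Ioo 0 ε, HasDerivAt S (L h) h)
    (hSL : ∀ h ∈ Set.Ioo 0 ε, S h = (2 / 3) * h * L h)
    (hlim : Tendsto (fun h => L h / Real.sqrt h) (𝓝[>] 0) (𝓝 c)) :
    ∀ h ∈ Set.Ioo 0 ε, L h = c * Real.sqrt h := by
  intro h hh
  set g : ℝ → ℝ := fun x => S x * x ^ (-(3 / 2 : ℝ))
  have hg_deriv : ∀ x ∈ Set.Ioo 0 ε, HasDerivAt g 0 x := fun x hx =>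
    hasDerivAt_mul_rpow_neg_of_mul_deriv_eq (hS x hx) hx.1 (by rw [hSL x hx]; ring)
  have hg_eq : ∀ x ∈ Set.Ioo 0 ε, 2 / 3 * (L x / √x) = g x := fun x hx => by
    dsimp only [g]
    rw [hSL x hx, div_eq_mul_inv (L x), ← rpow_neg_three_halves_mul hx.1]
    ring
  have hg_lim : Tendsto g (𝓝[>] 0) (𝓝 (2 / 3 * c)) :=
    (hlim.const_mul (2 / 3)).congr' <|
      eventually_of_mem (Ioo_mem_nhdsGT (hh.1.trans hh.2)) hg_eq
  have hL := (hg_eq h hh).trans (eqOn_Ioo_of_hasDerivAt_zero_of_tendsto hg_deriv hg_lim h hh)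
  have hsqrt : 0 < √h := Real.sqrt_pos.mpr hh.1
  field_simp at hL
  linarith

theorem chord_length_sqrt_of_two_thirds (ε c : ℝ) (hε : 0 < ε) (hc : 0 < c)
    (S L : ℝ → ℝ)
    (hS : ∀ h ∈ Set.Ioo 0 ε, HasDerivAt S (L h) h)
    (hLcont : ContinuousOn L (Set.Ioo 0 ε))
    (hLdiff : DifferentiableOn ℝ L (Set.Ioo 0 ε))
    (hLpos : ∀ h ∈ Set.Ioo 0 ε, 0 < L h)
    (hSL : ∀ h ∈ Set.Ioo 0 ε, S h = (2 / 3) * h * L h)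
    (hlim : Tendsto (fun h => L h / Real.sqrt h) (𝓝[>] 0) (𝓝 c)) :
    ∀ h ∈ Set.Ioo 0 ε, L h = c * Real.sqrt h :=
  chord_length_sqrt_of_two_thirds_general ε c S L hS hSL hlim
end

section
/- There is no C^2 function f on an open interval containing 0 with f(0) = 0, f'(0) = 0, f''(0) > 0 satisfying 2x^2 f''(x) − x f'(x) + f(x) = 0 for all x in the interval. -/
/-!
Near `0` a `C²` function with `f 0 = f' 0 = 0` and `f'' 0 = c` behaves like `c x² / 2`, and the
Euler operator `2 x² D² - x D + 1` sends `x²` to `3 x²`, because `2` is not a root of the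
indicial polynomial `2 r (r - 1) - r + 1 = (2 r - 1) (r - 1)`. Dividing the equation by `x²` and
letting `x → 0` therefore gives `3 c / 2 = 0`.
-/

open Filter Set Topology

lemma tendsto_div_self_of_hasDerivAt {g : ℝ → ℝ} {c : ℝ} (hg : HasDerivAt g c 0) (hg0 : g 0 = 0) :
    Tendsto (fun x => g x / x) (𝓝[≠] 0) (𝓝 c) := by
  simpa [hg0, div_eq_inv_mul] using hg.tendsto_slope_zero

lemma tendsto_div_sq_of_hasDerivAt_deriv {f : ℝ → ℝ} {c : ℝ}
    (hf : ∀ᶠ x in 𝓝 0, DifferentiableAt ℝ f x) (hf0 : f 0 = 0) (hf'0 : deriv f 0 = 0)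
    (hf'' : HasDerivAt (deriv f) c 0) :
    Tendsto (fun x => f x / x ^ 2) (𝓝[≠] 0) (𝓝 (c / 2)) := by
  refine HasDerivAt.lhopital_zero_nhdsNE (f' := deriv f) (g' := fun x => 2 * x)
    (eventually_nhdsWithin_of_eventually_nhds (hf.mono fun x hx => hx.hasDerivAt))
    (.of_forall fun x => by simpa using hasDerivAt_pow 2 x) ?_ ?_ ?_ ?_
  · filter_upwards [self_mem_nhdsWithin] with x hx using mul_ne_zero two_ne_zero hx
  · simpa [hf0] using hf.self_of_nhds.continuousAt.tendsto.mono_left nhdsWithin_le_nhds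
  · simpa using ((continuous_pow 2).tendsto (0 : ℝ)).mono_left nhdsWithin_le_nhds
  · refine ((tendsto_div_self_of_hasDerivAt hf'' hf'0).div_const 2).congr fun x => ?_
    ring

theorem tendsto_euler_operator_div_sq {f : ℝ → ℝ} {c : ℝ} (a b d : ℝ)
    (hf : ∀ᶠ x in 𝓝 0, DifferentiableAt ℝ f x) (hf0 : f 0 = 0) (hf'0 : deriv f 0 = 0)
    (hf'' : HasDerivAt (deriv f) c 0) (hcont : ContinuousAt (deriv (deriv f)) 0) :
    Tendsto (fun x => (a * x ^ 2 * deriv (deriv f) x + b * x * deriv f x + d * f x) / x ^ 2)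
      (𝓝[≠] 0) (𝓝 ((a + b + d / 2) * c)) := by
  have h2 : Tendsto (deriv (deriv f)) (𝓝[≠] 0) (𝓝 c) :=
    hf''.deriv ▸ hcont.tendsto.mono_left nhdsWithin_le_nhds
  have h1 := tendsto_div_self_of_hasDerivAt hf'' hf'0
  have h0 := tendsto_div_sq_of_hasDerivAt_deriv hf hf0 hf'0 hf''
  have hlim := ((h2.const_mul a).add (h1.const_mul b)).add (h0.const_mul d)
  rw [show (a + b + d / 2) * c = a * c + b * c + d * (c / 2) by ring]
  refine hlim.congr' ?_
  filter_upwards [self_mem_nhdsWithin] with x (hx : x ≠ 0)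
  field_simp

theorem no_convex_solution_of_ode :
    ¬ ∃ (p q : ℝ) (f : ℝ → ℝ), p < 0 ∧ 0 < q ∧
      ContDiffOn ℝ 2 f (Set.Ioo p q) ∧
      f 0 = 0 ∧ deriv f 0 = 0 ∧ 0 < iteratedDeriv 2 f 0 ∧
      ∀ x ∈ Set.Ioo p q,
        2 * x ^ 2 * iteratedDeriv 2 f x - x * deriv f x + f x = 0 := by
  rintro ⟨p, q, f, hp, hq, hf, hf0, hf'0, hc, hode⟩
  simp only [iteratedDeriv_eq_iterate, Function.iterate_succ, Function.iterate_zero,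
    Function.comp_apply, Function.id_def] at hc hode
  have hs : Ioo p q ∈ 𝓝 (0 : ℝ) := Ioo_mem_nhds hp hq
  have hdiff : ∀ᶠ x in 𝓝 0, DifferentiableAt ℝ f x := by
    filter_upwards [hs] with x hx
    exact (hf.differentiableOn two_ne_zero).differentiableAt (Ioo_mem_nhds hx.1 hx.2)
  have hf' : ContDiffOn ℝ 1 (deriv f) (Ioo p q) := hf.deriv_of_isOpen isOpen_Ioo le_rfl
  have hf'' : HasDerivAt (deriv f) (deriv (deriv f) 0) 0 :=
    ((hf'.contDiffAt hs).differentiableAt one_ne_zero).hasDerivAt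
  have hcont : ContinuousAt (deriv (deriv f)) 0 :=
    (hf'.continuousOn_deriv_of_isOpen isOpen_Ioo le_rfl).continuousAt hs
  have hlim := tendsto_euler_operator_div_sq 2 (-1) 1 hdiff hf0 hf'0 hf'' hcont
  have hzero : Tendsto (fun x => (2 * x ^ 2 * deriv (deriv f) x + -1 * x * deriv f x + 1 * f x) /
      x ^ 2) (𝓝[≠] 0) (𝓝 0) := by
    refine tendsto_const_nhds.congr' ?_
    filter_upwards [nhdsWithin_le_nhds hs] with x hx
    exact (div_eq_zero_iff.2 (.inl (by linarith [hode x hx]))).symm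
  have hc_zero : (2 + -1 + 1 / 2) * deriv (deriv f) 0 = 0 := tendsto_nhds_unique hlim hzero
  linarith
end
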